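/- For every α ∈ [0,1) there is a 3-buyer 3-seller market in which no seller joining the platform is a pure Platform Equilibrium and the ratio of optimal welfare to equilibrium welfare approaches (2−α)/(1−α) as ε → 0. Concretely: direct edges (A,a),(B,b),(C,c) of value 1 and missing-link values v_{Ba} = v_{Cb} = v_{Ac} = (2−α)/(1−α) − ε, all other values 0; then each seller's off-platform price is 1, her on-platform utility if she alone joins is (1−α)·((2−α)/(1−α) − ε − 1) = 1 − ε(1−α) < 1, so no seller joining is an equilibrium with welfare 3, while the optimal welfare is 3((2−α)/(1−α) − ε). -/
import Mathlib


open Finset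

/-- A matching between buyers `B` and sellers `S` along edges of the bipartite graph `g`:
a set of (buyer, seller) pairs using only allowed edges, with each buyer and each seller
appearing at most once. -/
def IsMatching (B S : Finset ℕ) (g : ℕ → ℕ → Prop) (M : Finset (ℕ × ℕ)) : Prop :=
  (∀ e ∈ M, e.1 ∈ B ∧ e.2 ∈ S ∧ g e.1 e.2) ∧
  ∀ e ∈ M, ∀ e' ∈ M, e ≠ e' → e.1 ≠ e'.1 ∧ e.2 ≠ e'.2

/-- `W B S g v` is the maximum total weight of a matching between buyers `B` and sellers `S`
along edges of `g`, where the weight of edge (i, j) is `v i j`. -/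
noncomputable def W (B S : Finset ℕ) (g : ℕ → ℕ → Prop) (v : ℕ → ℕ → ℝ) : ℝ :=
  sSup {x | ∃ M : Finset (ℕ × ℕ), IsMatching B S g M ∧ x = ∑ e ∈ M, v e.1 e.2}

/-- The graph `g` augmented so that every seller in `P` (the on-platform sellers) is
connected to all buyers. -/
def gPlat (g : ℕ → ℕ → Prop) (P : Finset ℕ) : ℕ → ℕ → Prop :=
  fun i j => g i j ∨ j ∈ P

/-- `topSum v A k` is the sum of the `k` largest values `v i` over `i ∈ A`
(or of all of them if `|A| < k`), expressed as the maximum sum over subsets of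
`A` of size at most `k` (for nonnegative values). -/
noncomputable def topSum (v : ℕ → ℝ) (A : Finset ℕ) (k : ℕ) : ℝ :=
  sSup {x | ∃ T ⊆ A, T.card ≤ k ∧ x = ∑ i ∈ T, v i}

/-- The maximum competitive price of seller `j` when the set `P` of sellers is on the
platform: `j`'s marginal contribution to the optimal welfare under the augmented graph. -/
noncomputable def price (B S : Finset ℕ) (g : ℕ → ℕ → Prop) (v : ℕ → ℕ → ℝ)
    (P : Finset ℕ) (j : ℕ) : ℝ :=
  W B S (gPlat g P) v - W B (S.erase j) (gPlat g P) v

/-- Pure Platform Equilibrium at transaction-fee fraction `α`: the set `P ⊆ S` of sellers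
joins the platform; an on-platform seller receives `(1−α)` times her maximum competitive
price and an off-platform seller her full maximum competitive price; no seller gains by
unilaterally switching her decision. -/
noncomputable def IsPE (B S : Finset ℕ) (g : ℕ → ℕ → Prop) (v : ℕ → ℕ → ℝ)
    (α : ℝ) (P : Finset ℕ) : Prop :=
  P ⊆ S ∧
  (∀ j ∈ P, price B S g v (P.erase j) j ≤ (1 - α) * price B S g v P j) ∧
  (∀ j ∈ S, j ∉ P → (1 - α) * price B S g v (insert j P) j ≤ price B S g v P j)


section Aux

variable {B S : Finset ℕ} {g : ℕ → ℕ → Prop} {v : ℕ → ℕ → ℝ}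

lemma isMatching_empty : IsMatching B S g ∅ := by
  unfold IsMatching
  simp

lemma W_le {c : ℝ} (h : ∀ M, IsMatching B S g M → ∑ e ∈ M, v e.1 e.2 ≤ c) :
    W B S g v ≤ c := by
  have hne : {x | ∃ M : Finset (ℕ × ℕ), IsMatching B S g M ∧ x = ∑ e ∈ M, v e.1 e.2}.Nonempty :=
    ⟨0, ∅, isMatching_empty, by simp⟩
  exact csSup_le hne (by rintro x ⟨M, hM, rfl⟩; exact h M hM)

lemma le_W {c : ℝ} {M : Finset (ℕ × ℕ)} (hM : IsMatching B S g M)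
    (h : ∀ M', IsMatching B S g M' → ∑ e ∈ M', v e.1 e.2 ≤ c) :
    ∑ e ∈ M, v e.1 e.2 ≤ W B S g v :=
  le_csSup ⟨c, by rintro x ⟨M', hM', rfl⟩; exact h M' hM'⟩ ⟨M, hM, rfl⟩

end Aux

/-- Tight instance for the Price of Anarchy: for every `α ∈ [0,1)` and small `ε > 0`, in
the 3-buyer 3-seller market with direct edges (0,0),(1,1),(2,2) of value 1 and off-graph
values `v_{10} = v_{21} = v_{02} = (2−α)/(1−α) − ε` (all other values 0), no seller joining
is a pure Platform Equilibrium; its welfare is 3 while the optimal welfare is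
`3·((2−α)/(1−α) − ε)`, so the ratio approaches `(2−α)/(1−α)` as `ε → 0`. -/
theorem poa_tight_instance (α ε : ℝ) (hα0 : 0 ≤ α) (hα1 : α < 1)
    (hε0 : 0 < ε) (hε1 : ε < 1) :
    let B : Finset ℕ := {0, 1, 2}
    let S : Finset ℕ := {0, 1, 2}
    let g : ℕ → ℕ → Prop := fun i j => i = j
    let q : ℝ := (2 - α) / (1 - α) - ε
    let v : ℕ → ℕ → ℝ := fun i j =>
      if i = j then 1
      else if (i = 1 ∧ j = 0) ∨ (i = 2 ∧ j = 1) ∨ (i = 0 ∧ j = 2) then q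
      else 0
    IsPE B S g v α ∅ ∧
    W B S g v = 3 ∧
    W B S (fun _ _ => True) v = 3 * q := by
  intro B S g q v
  have h1α : 0 < 1 - α := by linarith
  have hβ : 1 ≤ 1 / (1 - α) := by
    rw [le_div_iff₀ h1α]; linarith
  have hq : q = 1 / (1 - α) + 1 - ε := by
    show (2 - α) / (1 - α) - ε = _
    field_simp
    ring
  have hq1 : 1 < q := by rw [hq]; linarith
  have hq0 : 0 ≤ q := by linarith
  have hvnn : ∀ i j, 0 ≤ v i j := by
    intro i j
    simp only [v]
    split_ifs <;> linarith
  have hvq : ∀ i j, v i j ≤ q := by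
    intro i j
    simp only [v]
    split_ifs <;> linarith
  have hmono : ∀ (M E : Finset (ℕ × ℕ)), M ⊆ E →
      ∑ e ∈ M, v e.1 e.2 ≤ ∑ e ∈ E, v e.1 e.2 :=
    fun M E h => Finset.sum_le_sum_of_subset_of_nonneg h (fun e _ _ => hvnn e.1 e.2)
  have hv00 : v 0 0 = 1 := by norm_num [v]
  have hv11 : v 1 1 = 1 := by norm_num [v]
  have hv22 : v 2 2 = 1 := by norm_num [v]
  have hv10 : v 1 0 = q := by norm_num [v]
  have hv21 : v 2 1 = q := by norm_num [v]
  have hv02 : v 0 2 = q := by norm_num [v]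
  have hv20 : v 2 0 = 0 := by norm_num [v]
  have hv01 : v 0 1 = 0 := by norm_num [v]
  have hv12 : v 1 2 = 0 := by norm_num [v]
  -- sum evaluations
  have s3 : ∑ e ∈ ({(0,0),(1,1),(2,2)} : Finset (ℕ × ℕ)), v e.1 e.2 = 3 := by
    rw [Finset.sum_insert (by decide), Finset.sum_insert (by decide), Finset.sum_singleton]
    simp [hv00, hv11, hv22]; norm_num
  have sq3 : ∑ e ∈ ({(1,0),(2,1),(0,2)} : Finset (ℕ × ℕ)), v e.1 e.2 = 3 * q := by
    rw [Finset.sum_insert (by decide), Finset.sum_insert (by decide), Finset.sum_singleton]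
    simp only [hv10, hv21, hv02]; ring
  -- bound for the diagonal graph on full seller set
  have bound2 : ∀ M, IsMatching B S g M → ∑ e ∈ M, v e.1 e.2 ≤ 3 := by
    intro M hM
    have hsub : M ⊆ ({(0,0),(1,1),(2,2)} : Finset (ℕ × ℕ)) := by
      intro e he
      obtain ⟨h1, h2, h3⟩ := hM.1 e he
      obtain ⟨a, b⟩ := e
      simp only [g] at h3
      subst h3
      simp only [B, Finset.mem_insert, Finset.mem_singleton] at h1
      rcases h1 with rfl | rfl | rfl <;> decide
    calc ∑ e ∈ M, v e.1 e.2 ≤ _ := hmono _ _ hsub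
      _ = 3 := s3
  have hM2 : IsMatching B S g ({(0,0),(1,1),(2,2)} : Finset (ℕ × ℕ)) := by
    constructor
    · intro e he
      fin_cases he <;> simp [B, S, g]
    · intro e he e' he' hne
      fin_cases he <;> fin_cases he' <;> first | exact absurd rfl hne | decide
  have W2 : W B S g v = 3 := by
    apply le_antisymm (W_le bound2)
    calc (3:ℝ) = _ := s3.symm
      _ ≤ W B S g v := le_W hM2 bound2
  -- full graph
  have bound3 : ∀ M, IsMatching B S (fun _ _ => True) M → ∑ e ∈ M, v e.1 e.2 ≤ 3 * q := by
    intro M hM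
    have hcard : M.card ≤ 3 := by
      have hinj : ∀ e ∈ M, ∀ e' ∈ M, (fun x : ℕ × ℕ => x.1) e = (fun x : ℕ × ℕ => x.1) e' → e = e' := by
        intro e he e' he' h
        by_contra hne
        exact (hM.2 e he e' he' hne).1 h
      have := Finset.card_le_card_of_injOn (fun x : ℕ × ℕ => x.1)
        (fun e he => (hM.1 e he).1) hinj
      simpa [B] using this
    calc ∑ e ∈ M, v e.1 e.2 ≤ ∑ _e ∈ M, q := Finset.sum_le_sum (fun e _ => hvq e.1 e.2)
      _ = M.card * q := by rw [Finset.sum_const, nsmul_eq_mul]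
      _ ≤ 3 * q := by
          apply mul_le_mul_of_nonneg_right _ hq0
          exact_mod_cast hcard
  have hM3 : IsMatching B S (fun _ _ => True) ({(1,0),(2,1),(0,2)} : Finset (ℕ × ℕ)) := by
    constructor
    · intro e he
      fin_cases he <;> simp [B, S]
    · intro e he e' he' hne
      fin_cases he <;> fin_cases he' <;> first | exact absurd rfl hne | decide
  have W3 : W B S (fun _ _ => True) v = 3 * q := by
    apply le_antisymm (W_le bound3)
    calc (3 * q : ℝ) = _ := sq3.symm
      _ ≤ W B S (fun _ _ => True) v := le_W hM3 bound3
  refine ⟨?_, W2, W3⟩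
  -- the IsPE part
  refine ⟨by simp, by simp, ?_⟩
  intro j hj _
  -- generic facts about erased seller sets with P ⊆ {j}
  have erase_bound : ∀ (j : ℕ) (P : Finset ℕ), (∀ x ∈ P, x = j) →
      ∀ M, IsMatching B (S.erase j) (gPlat g P) M →
      ∑ e ∈ M, v e.1 e.2 ≤ ∑ e ∈ (({(0,0),(1,1),(2,2)} : Finset (ℕ × ℕ)).erase (j, j)), v e.1 e.2 := by
    intro j P hP M hM
    apply hmono
    intro e he
    obtain ⟨h1, h2, h3⟩ := hM.1 e he
    obtain ⟨a, b⟩ := e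
    have hbj : b ≠ j := (Finset.mem_erase.1 h2).1
    have hbS : b ∈ S := (Finset.mem_erase.1 h2).2
    have hab : a = b := by
      rcases h3 with h | h
      · exact h
      · exact absurd (hP b h) hbj
    subst hab
    rw [Finset.mem_erase]
    constructor
    · intro h
      exact hbj (congrArg Prod.snd h)
    · simp only [B, Finset.mem_insert, Finset.mem_singleton] at h1
      rcases h1 with rfl | rfl | rfl <;> decide
  have erase_match : ∀ (j : ℕ) (P : Finset ℕ) (M : Finset (ℕ × ℕ)),
      (∀ e ∈ M, e.1 ∈ B ∧ e.2 ∈ S.erase j ∧ e.1 = e.2) →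
      (∀ e ∈ M, ∀ e' ∈ M, e ≠ e' → e.1 ≠ e'.1 ∧ e.2 ≠ e'.2) →
      IsMatching B (S.erase j) (gPlat g P) M := by
    intro j P M h1 h2
    exact ⟨fun e he => ⟨(h1 e he).1, (h1 e he).2.1, Or.inl (h1 e he).2.2⟩, h2⟩
  -- now case on j
  simp only [S, Finset.mem_insert, Finset.mem_singleton] at hj
  have key : ∀ (j : ℕ), j ∈ S →
      W B (S.erase j) (gPlat g ∅) v ≤ 2 →
      (2 : ℝ) ≤ W B (S.erase j) (gPlat g ({j} : Finset ℕ)) v →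
      W B S (gPlat g ({j} : Finset ℕ)) v ≤ 2 + 1 / (1 - α) →
      (3 : ℝ) ≤ W B S (gPlat g ∅) v →
      (1 - α) * price B S g v (insert j ∅) j ≤ price B S g v ∅ j := by
    intro j _ he0 he1 ht1 ht0
    have hp1 : price B S g v ({j} : Finset ℕ) j ≤ 1 / (1 - α) := by
      simp only [price]
      linarith
    have hp0 : (1 : ℝ) ≤ price B S g v ∅ j := by
      simp only [price]
      linarith
    have : (1 - α) * price B S g v ({j} : Finset ℕ) j ≤ (1 - α) * (1 / (1 - α)) :=
      mul_le_mul_of_nonneg_left hp1 (le_of_lt h1α)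
    rw [mul_one_div_cancel (ne_of_gt h1α)] at this
    simpa using le_trans this hp0
  -- bound for gPlat g ∅ on full seller set (same as diagonal)
  have bound20 : ∀ M, IsMatching B S (gPlat g ∅) M → ∑ e ∈ M, v e.1 e.2 ≤ 3 := by
    intro M hM
    apply bound2
    refine ⟨fun e he => ?_, hM.2⟩
    obtain ⟨h1, h2, h3⟩ := hM.1 e he
    refine ⟨h1, h2, ?_⟩
    rcases h3 with h | h
    · exact h
    · simp at h
  have ht0 : (3 : ℝ) ≤ W B S (gPlat g ∅) v := by
    have hM : IsMatching B S (gPlat g ∅) ({(0,0),(1,1),(2,2)} : Finset (ℕ × ℕ)) :=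
      ⟨fun e he => ⟨(hM2.1 e he).1, (hM2.1 e he).2.1, Or.inl (hM2.1 e he).2.2⟩, hM2.2⟩
    calc (3:ℝ) = _ := s3.symm
      _ ≤ _ := le_W hM bound20
  rcases hj with rfl | rfl | rfl
  · -- j = 0
    apply key 0 (by simp [S])
    · apply W_le
      intro M hM
      refine le_trans (erase_bound 0 ∅ (by simp) M hM) ?_
      rw [show (({(0,0),(1,1),(2,2)} : Finset (ℕ × ℕ)).erase (0,0)) = {(1,1),(2,2)} by decide]
      rw [Finset.sum_insert (by decide), Finset.sum_singleton, hv11, hv22]; norm_num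
    · have hM : IsMatching B (S.erase 0) (gPlat g ({0} : Finset ℕ)) ({(1,1),(2,2)} : Finset (ℕ × ℕ)) := by
        apply erase_match
        · intro e he; fin_cases he <;> simp [B, S]
        · intro e he e' he' hne; fin_cases he <;> fin_cases he' <;> first | exact absurd rfl hne | decide
      have hsum : ∑ e ∈ ({(1,1),(2,2)} : Finset (ℕ × ℕ)), v e.1 e.2 = 2 := by
        rw [Finset.sum_insert (by decide), Finset.sum_singleton, hv11, hv22]; norm_num
      calc (2:ℝ) = _ := hsum.symm
        _ ≤ _ := le_W (c := 2) hM (by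
          intro M' hM'
          refine le_trans (erase_bound 0 {0} (by simp) M' hM') ?_
          rw [show (({(0,0),(1,1),(2,2)} : Finset (ℕ × ℕ)).erase (0,0)) = {(1,1),(2,2)} by decide]
          exact le_of_eq hsum)
    · apply W_le
      intro M hM
      have hsub : M ⊆ ({(0,0),(1,1),(2,2),(1,0),(2,0)} : Finset (ℕ × ℕ)) := by
        intro e he
        obtain ⟨h1, h2, h3⟩ := hM.1 e he
        obtain ⟨a, b⟩ := e
        simp only [B, Finset.mem_insert, Finset.mem_singleton] at h1
        simp only [S, Finset.mem_insert, Finset.mem_singleton] at h2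
        simp only [gPlat, g, Finset.mem_singleton] at h3
        rcases h1 with rfl | rfl | rfl <;> rcases h2 with rfl | rfl | rfl <;>
          first | decide | (rcases h3 with h | h <;> simp at h)
      by_cases h10 : (1, 0) ∈ M
      · have hsub2 : M ⊆ ({(1,0),(2,2)} : Finset (ℕ × ℕ)) := by
          intro e he
          by_cases hee : e = (1, 0)
          · subst hee; decide
          · have hd := hM.2 e he (1,0) h10 hee
            have heE := hsub he
            obtain ⟨a, b⟩ := e
            simp only [Finset.mem_insert, Finset.mem_singleton, Prod.mk.injEq] at heE ⊢
            simp only at hd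
            rcases heE with ⟨rfl, rfl⟩ | ⟨rfl, rfl⟩ | ⟨rfl, rfl⟩ | ⟨rfl, rfl⟩ | ⟨rfl, rfl⟩ <;>
              first
              | decide
              | exact absurd rfl hee
              | exact absurd rfl hd.1
              | exact absurd rfl hd.2
        refine le_trans (hmono _ _ hsub2) ?_
        rw [Finset.sum_insert (by decide), Finset.sum_singleton, hv10, hv22, hq]
        linarith
      · have hsub2 : M ⊆ ({(0,0),(1,1),(2,2),(2,0)} : Finset (ℕ × ℕ)) := by
          intro e he
          have heE := hsub he
          simp only [Finset.mem_insert, Finset.mem_singleton] at heE ⊢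
          rcases heE with h | h | h | h | h
          · exact Or.inl h
          · exact Or.inr (Or.inl h)
          · exact Or.inr (Or.inr (Or.inl h))
          · exact absurd (h ▸ he) h10
          · exact Or.inr (Or.inr (Or.inr h))
        refine le_trans (hmono _ _ hsub2) ?_
        rw [Finset.sum_insert (by decide), Finset.sum_insert (by decide),
          Finset.sum_insert (by decide), Finset.sum_singleton, hv00, hv11, hv22, hv20]
        linarith
    · exact ht0
  · -- j = 1
    apply key 1 (by simp [S])
    · apply W_le
      intro M hM
      refine le_trans (erase_bound 1 ∅ (by simp) M hM) ?_
      rw [show (({(0,0),(1,1),(2,2)} : Finset (ℕ × ℕ)).erase (1,1)) = {(0,0),(2,2)} by decide]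
      rw [Finset.sum_insert (by decide), Finset.sum_singleton, hv00, hv22]; norm_num
    · have hM : IsMatching B (S.erase 1) (gPlat g ({1} : Finset ℕ)) ({(0,0),(2,2)} : Finset (ℕ × ℕ)) := by
        apply erase_match
        · intro e he; fin_cases he <;> simp [B, S]
        · intro e he e' he' hne; fin_cases he <;> fin_cases he' <;> first | exact absurd rfl hne | decide
      have hsum : ∑ e ∈ ({(0,0),(2,2)} : Finset (ℕ × ℕ)), v e.1 e.2 = 2 := by
        rw [Finset.sum_insert (by decide), Finset.sum_singleton, hv00, hv22]; norm_num
      calc (2:ℝ) = _ := hsum.symm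
        _ ≤ _ := le_W (c := 2) hM (by
          intro M' hM'
          refine le_trans (erase_bound 1 {1} (by simp) M' hM') ?_
          rw [show (({(0,0),(1,1),(2,2)} : Finset (ℕ × ℕ)).erase (1,1)) = {(0,0),(2,2)} by decide]
          exact le_of_eq hsum)
    · apply W_le
      intro M hM
      have hsub : M ⊆ ({(0,0),(1,1),(2,2),(0,1),(2,1)} : Finset (ℕ × ℕ)) := by
        intro e he
        obtain ⟨h1, h2, h3⟩ := hM.1 e he
        obtain ⟨a, b⟩ := e
        simp only [B, Finset.mem_insert, Finset.mem_singleton] at h1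
        simp only [S, Finset.mem_insert, Finset.mem_singleton] at h2
        simp only [gPlat, g, Finset.mem_singleton] at h3
        rcases h1 with rfl | rfl | rfl <;> rcases h2 with rfl | rfl | rfl <;>
          first | decide | (rcases h3 with h | h <;> simp at h)
      by_cases h10 : (2, 1) ∈ M
      · have hsub2 : M ⊆ ({(2,1),(0,0)} : Finset (ℕ × ℕ)) := by
          intro e he
          by_cases hee : e = (2, 1)
          · subst hee; decide
          · have hd := hM.2 e he (2,1) h10 hee
            have heE := hsub he
            obtain ⟨a, b⟩ := e
            simp only [Finset.mem_insert, Finset.mem_singleton, Prod.mk.injEq] at heE ⊢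
            simp only at hd
            rcases heE with ⟨rfl, rfl⟩ | ⟨rfl, rfl⟩ | ⟨rfl, rfl⟩ | ⟨rfl, rfl⟩ | ⟨rfl, rfl⟩ <;>
              first
              | decide
              | exact absurd rfl hee
              | exact absurd rfl hd.1
              | exact absurd rfl hd.2
        refine le_trans (hmono _ _ hsub2) ?_
        rw [Finset.sum_insert (by decide), Finset.sum_singleton, hv21, hv00, hq]
        linarith
      · have hsub2 : M ⊆ ({(0,0),(1,1),(2,2),(0,1)} : Finset (ℕ × ℕ)) := by
          intro e he
          have heE := hsub he
          simp only [Finset.mem_insert, Finset.mem_singleton] at heE ⊢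
          rcases heE with h | h | h | h | h
          · exact Or.inl h
          · exact Or.inr (Or.inl h)
          · exact Or.inr (Or.inr (Or.inl h))
          · exact Or.inr (Or.inr (Or.inr h))
          · exact absurd (h ▸ he) h10
        refine le_trans (hmono _ _ hsub2) ?_
        rw [Finset.sum_insert (by decide), Finset.sum_insert (by decide),
          Finset.sum_insert (by decide), Finset.sum_singleton, hv00, hv11, hv22, hv01]
        linarith
    · exact ht0
  · -- j = 2
    apply key 2 (by simp [S])
    · apply W_le
      intro M hM
      refine le_trans (erase_bound 2 ∅ (by simp) M hM) ?_
      rw [show (({(0,0),(1,1),(2,2)} : Finset (ℕ × ℕ)).erase (2,2)) = {(0,0),(1,1)} by decide]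
      rw [Finset.sum_insert (by decide), Finset.sum_singleton, hv00, hv11]; norm_num
    · have hM : IsMatching B (S.erase 2) (gPlat g ({2} : Finset ℕ)) ({(0,0),(1,1)} : Finset (ℕ × ℕ)) := by
        apply erase_match
        · intro e he; fin_cases he <;> simp [B, S]
        · intro e he e' he' hne; fin_cases he <;> fin_cases he' <;> first | exact absurd rfl hne | decide
      have hsum : ∑ e ∈ ({(0,0),(1,1)} : Finset (ℕ × ℕ)), v e.1 e.2 = 2 := by
        rw [Finset.sum_insert (by decide), Finset.sum_singleton, hv00, hv11]; norm_num
      calc (2:ℝ) = _ := hsum.symm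
        _ ≤ _ := le_W (c := 2) hM (by
          intro M' hM'
          refine le_trans (erase_bound 2 {2} (by simp) M' hM') ?_
          rw [show (({(0,0),(1,1),(2,2)} : Finset (ℕ × ℕ)).erase (2,2)) = {(0,0),(1,1)} by decide]
          exact le_of_eq hsum)
    · apply W_le
      intro M hM
      have hsub : M ⊆ ({(0,0),(1,1),(2,2),(0,2),(1,2)} : Finset (ℕ × ℕ)) := by
        intro e he
        obtain ⟨h1, h2, h3⟩ := hM.1 e he
        obtain ⟨a, b⟩ := e
        simp only [B, Finset.mem_insert, Finset.mem_singleton] at h1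
        simp only [S, Finset.mem_insert, Finset.mem_singleton] at h2
        simp only [gPlat, g, Finset.mem_singleton] at h3
        rcases h1 with rfl | rfl | rfl <;> rcases h2 with rfl | rfl | rfl <;>
          first | decide | (rcases h3 with h | h <;> simp at h)
      by_cases h10 : (0, 2) ∈ M
      · have hsub2 : M ⊆ ({(0,2),(1,1)} : Finset (ℕ × ℕ)) := by
          intro e he
          by_cases hee : e = (0, 2)
          · subst hee; decide
          · have hd := hM.2 e he (0,2) h10 hee
            have heE := hsub he
            obtain ⟨a, b⟩ := e
            simp only [Finset.mem_insert, Finset.mem_singleton, Prod.mk.injEq] at heE ⊢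
            simp only at hd
            rcases heE with ⟨rfl, rfl⟩ | ⟨rfl, rfl⟩ | ⟨rfl, rfl⟩ | ⟨rfl, rfl⟩ | ⟨rfl, rfl⟩ <;>
              first
              | decide
              | exact absurd rfl hee
              | exact absurd rfl hd.1
              | exact absurd rfl hd.2
        refine le_trans (hmono _ _ hsub2) ?_
        rw [Finset.sum_insert (by decide), Finset.sum_singleton, hv02, hv11, hq]
        linarith
      · have hsub2 : M ⊆ ({(0,0),(1,1),(2,2),(1,2)} : Finset (ℕ × ℕ)) := by
          intro e he
          have heE := hsub he
          simp only [Finset.mem_insert, Finset.mem_singleton] at heE ⊢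
          rcases heE with h | h | h | h | h
          · exact Or.inl h
          · exact Or.inr (Or.inl h)
          · exact Or.inr (Or.inr (Or.inl h))
          · exact absurd (h ▸ he) h10
          · exact Or.inr (Or.inr (Or.inr h))
        refine le_trans (hmono _ _ hsub2) ?_
        rw [Finset.sum_insert (by decide), Finset.sum_insert (by decide),
          Finset.sum_insert (by decide), Finset.sum_singleton, hv00, hv11, hv22, hv12]
        linarith
    · exact ht0
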